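/- arXiv:2212.09164 — 3 statements merged into one kernel-verified Lean document; each statement's English description precedes it below -/
import Mathlib

section
/- For all real numbers a, b and every real p ≥ 1, |a|^p + |b|^p ≤ |a + b|^p + |a − b|^p. -/
/-! Both `a` and `b` are midpoints of `a + b` and `±(a - b)`, so the claim is the sum of two
instances of the midpoint convexity of `x ↦ |x| ^ p`. -/

lemma abs_midpoint_rpow_le (x y : ℝ) {p : ℝ} (hp : 1 ≤ p) :
    |(x + y) / 2| ^ p ≤ (|x| ^ p + |y| ^ p) / 2 := by
  have h_abs : |(x + y) / 2| ≤ (|x| + |y|) / 2 := by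
    rw [abs_div, abs_two]
    gcongr
    exact abs_add_le x y
  have h_convex := (convexOn_rpow hp).2 (abs_nonneg x) (abs_nonneg y)
    (by norm_num : (0 : ℝ) ≤ 1 / 2) (by norm_num : (0 : ℝ) ≤ 1 / 2) (by norm_num)
  calc |(x + y) / 2| ^ p ≤ ((|x| + |y|) / 2) ^ p :=
        Real.rpow_le_rpow (abs_nonneg _) h_abs (by linarith)
    _ = ((1 / 2 : ℝ) • |x| + (1 / 2 : ℝ) • |y|) ^ p := by
        rw [smul_eq_mul, smul_eq_mul]; ring_nf
    _ ≤ (1 / 2 : ℝ) • |x| ^ p + (1 / 2 : ℝ) • |y| ^ p := h_convex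
    _ = (|x| ^ p + |y| ^ p) / 2 := by
        rw [smul_eq_mul, smul_eq_mul]; ring

/-- For all reals `a b` and every real `p ≥ 1`, `|a|^p + |b|^p ≤ |a+b|^p + |a−b|^p`. -/
theorem stmt_2 (a b p : ℝ) (hp : 1 ≤ p) :
    |a| ^ p + |b| ^ p ≤ |a + b| ^ p + |a - b| ^ p := by
  have ha := abs_midpoint_rpow_le (a + b) (a - b) hp
  have hb := abs_midpoint_rpow_le (a + b) (b - a) hp
  rw [show (a + b + (a - b)) / 2 = a by ring] at ha
  rw [show (a + b + (b - a)) / 2 = b by ring, abs_sub_comm b a] at hb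
  linarith
end

section
/- Let p ≥ 1, n ≥ 2 an integer, and u ∈ L^p(0,1). For 0 ≤ k ≤ n−1 set a_k = n∫_{k/n}^{(k+1)/n} u(s) ds. Then for all 0 ≤ i < j ≤ n−1, |a_j − a_i|^p ≤ n^{p+1} ∫₀^{2/n} ∫₀^1 |u(x+s) − u(x)|^p dx ds, where u is extended by an element of L^p(0, 1 + 2/n). -/
/-!
Write `I_k = (k/n, (k+1)/n]` (`cell n k` below), so that `a_k` is the average of `u` over
`I_k`. Then `a_{k+1} - a_k` is the average of `u y - u x` over `x ∈ I_k`, `y ∈ I_{k+1}`, and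
`y = x + s` with `0 < s ≤ 2/n`; Jensen's inequality, applied to both averages, gives
`|a_{k+1} - a_k|^p ≤ n² ∫_{I_k} ∫_0^{2/n} |u(x+s) - u x|^p ds dx`.
Telescoping `a_j - a_i` over fewer than `n` consecutive differences costs a factor `n^{p-1}` by
the power-mean inequality, and the cells `I_k` are disjoint subsets of `(0, 1]`.
The estimates are carried out for `ℝ≥0∞`-valued integrals; going back to the Bochner integrals
requires the double integral to be finite, which follows from `u ∈ L^p`.
-/

open MeasureTheory Set
open scoped ENNReal

section Average

variable {α E : Type*} [MeasurableSpace α] [NormedAddCommGroup E] [NormedSpace ℝ E] {p : ℝ}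

theorem enorm_integral_rpow_le_lintegral_enorm_rpow {μ : Measure α}
    [IsZeroOrProbabilityMeasure μ] (hp : 1 ≤ p) (f : α → E) :
    ‖∫ x, f x ∂μ‖ₑ ^ p ≤ ∫⁻ x, ‖f x‖ₑ ^ p ∂μ := by
  have hp₀ : 0 < p := by linarith
  by_cases hf : AEStronglyMeasurable f μ
  swap
  · simp [integral_non_aestronglyMeasurable hf, ENNReal.zero_rpow_of_pos hp₀]
  rcases eq_zero_or_isProbabilityMeasure μ with rfl | _
  · simp [ENNReal.zero_rpow_of_pos hp₀]
  calc ‖∫ x, f x ∂μ‖ₑ ^ p ≤ eLpNorm f 1 μ ^ p := by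
        gcongr
        rw [eLpNorm_one_eq_lintegral_enorm]
        exact enorm_integral_le_lintegral_enorm f
    _ ≤ eLpNorm f (ENNReal.ofReal p) μ ^ p := by
        gcongr
        exact eLpNorm_le_eLpNorm_of_exponent_le (by simpa using hp) hf
    _ = ∫⁻ x, ‖f x‖ₑ ^ p ∂μ := by
        rw [lintegral_rpow_enorm_eq_rpow_eLpNorm' hp₀,
          eLpNorm_eq_eLpNorm' (by simpa using hp₀) ENNReal.ofReal_ne_top,
          ENNReal.toReal_ofReal hp₀.le]

theorem enorm_average_rpow_le_laverage_enorm_rpow (μ : Measure α) (hp : 1 ≤ p) (f : α → E) :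
    ‖⨍ x, f x ∂μ‖ₑ ^ p ≤ ⨍⁻ x, ‖f x‖ₑ ^ p ∂μ :=
  enorm_integral_rpow_le_lintegral_enorm_rpow hp f

variable [CompleteSpace E]

theorem average_sub_const {μ : Measure α} [IsFiniteMeasure μ] [NeZero μ] {f : α → E}
    (hf : Integrable f μ) (c : E) :
    ⨍ x, (f x - c) ∂μ = ⨍ x, f x ∂μ - c := by
  rw [average, integral_sub hf.to_average (integrable_const c), integral_const]
  simp [average]

theorem average_sub_average_eq_average_average {μ ν : Measure α} [IsFiniteMeasure μ] [NeZero μ]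
    [IsFiniteMeasure ν] [NeZero ν] {f : α → E} (hμ : Integrable f μ) (hν : Integrable f ν) :
    ⨍ y, f y ∂ν - ⨍ x, f x ∂μ = ⨍ x, ⨍ y, (f y - f x) ∂ν ∂μ := by
  simp_rw [average_sub_const hν, ← neg_sub (f _), average_neg, average_sub_const hμ, neg_sub]

end Average

theorem enorm_sub_rpow_le {E : Type*} [SeminormedAddGroup E] {p : ℝ} (hp : 1 ≤ p) (a b : E) :
    ‖a - b‖ₑ ^ p ≤ 2 ^ (p - 1) * (‖a‖ₑ ^ p + ‖b‖ₑ ^ p) :=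
  (ENNReal.rpow_le_rpow enorm_sub_le (by linarith)).trans
    (ENNReal.rpow_add_le_mul_rpow_add_rpow _ _ hp)

theorem setLIntegral_Ioc_comp_const_add (x c d : ℝ) (g : ℝ → ℝ≥0∞) :
    ∫⁻ s in Ioc c d, g (x + s) = ∫⁻ y in Ioc (x + c) (x + d), g y := by
  rw [← (measurePreserving_add_left volume x).setLIntegral_comp_preimage_emb
    (measurableEmbedding_addLeft x) g, preimage_const_add_Ioc, add_sub_cancel_left,
    add_sub_cancel_left]

theorem lintegral_lintegral_enorm_comp_add_sub_rpow_ne_top {E : Type*} [NormedAddCommGroup E]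
    {p a b c : ℝ} {v : ℝ → E} (hp : 1 ≤ p) (hc : 0 ≤ c)
    (hv : ∫⁻ y in Ioc a (b + c), ‖v y‖ₑ ^ p ≠ ∞) :
    ∫⁻ x in Ioc a b, ∫⁻ s in Ioc 0 c, ‖v (x + s) - v x‖ₑ ^ p ≠ ∞ := by
  set M := ∫⁻ y in Ioc a (b + c), ‖v y‖ₑ ^ p
  have h₂ : (2 : ℝ≥0∞) ^ (p - 1) ≠ ∞ := ENNReal.rpow_ne_top_of_nonneg (by linarith) (by simp)
  have hinner : ∀ x ∈ Ioc a b, ∫⁻ s in Ioc 0 c, ‖v (x + s) - v x‖ₑ ^ p ≤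
      2 ^ (p - 1) * (M + ENNReal.ofReal c * ‖v x‖ₑ ^ p) := fun x hx => by
    calc ∫⁻ s in Ioc 0 c, ‖v (x + s) - v x‖ₑ ^ p
        ≤ ∫⁻ s in Ioc 0 c, 2 ^ (p - 1) * (‖v (x + s)‖ₑ ^ p + ‖v x‖ₑ ^ p) :=
          lintegral_mono fun s => enorm_sub_rpow_le hp _ _
      _ = 2 ^ (p - 1) *
            ((∫⁻ y in Ioc (x + 0) (x + c), ‖v y‖ₑ ^ p) + ENNReal.ofReal c * ‖v x‖ₑ ^ p) := by
          rw [lintegral_const_mul' _ _ h₂, lintegral_add_right _ measurable_const,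
            setLIntegral_const, Real.volume_Ioc, sub_zero, mul_comm (ENNReal.ofReal c),
            setLIntegral_Ioc_comp_const_add x 0 c fun y => ‖v y‖ₑ ^ p]
      _ ≤ 2 ^ (p - 1) * (M + ENNReal.ofReal c * ‖v x‖ₑ ^ p) := by
          gcongr
          exact lintegral_mono_set (Ioc_subset_Ioc (by linarith [hx.1]) (by linarith [hx.2]))
  refine ne_top_of_le_ne_top ?_ (setLIntegral_mono' measurableSet_Ioc hinner)
  rw [lintegral_const_mul' _ _ h₂, lintegral_add_left measurable_const, setLIntegral_const,
    lintegral_const_mul' _ _ ENNReal.ofReal_ne_top]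
  have hab : ∫⁻ x in Ioc a b, ‖v x‖ₑ ^ p ≤ M :=
    lintegral_mono_set (Ioc_subset_Ioc le_rfl (by linarith))
  exact ENNReal.mul_ne_top h₂ (ENNReal.add_ne_top.2
    ⟨ENNReal.mul_ne_top hv measure_Ioc_lt_top.ne,
      ENNReal.mul_ne_top ENNReal.ofReal_ne_top (ne_top_of_le_ne_top hv hab)⟩)

theorem integral_integral_eq_toReal_lintegral_lintegral {α β : Type*} [MeasurableSpace α]
    [MeasurableSpace β] {μ : Measure α} {ν : Measure β} [SFinite ν] {f : α → β → ℝ}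
    (hf : Measurable (Function.uncurry f)) (hf₀ : ∀ x y, 0 ≤ f x y)
    (hfin : ∫⁻ x, ∫⁻ y, ENNReal.ofReal (f x y) ∂ν ∂μ ≠ ∞) :
    ∫ x, ∫ y, f x y ∂ν ∂μ = (∫⁻ x, ∫⁻ y, ENNReal.ofReal (f x y) ∂ν ∂μ).toReal := by
  have hmeas : Measurable fun x => ∫⁻ y, ENNReal.ofReal (f x y) ∂ν :=
    hf.ennreal_ofReal.lintegral_prod_right'
  rw [← integral_toReal hmeas.aemeasurable (ae_lt_top hmeas hfin)]
  congr with x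
  exact integral_eq_lintegral_of_nonneg_ae (ae_of_all _ (hf₀ x))
    hf.of_uncurry_left.aestronglyMeasurable

def cell (n k : ℕ) : Set ℝ := Ioc (k / n) ((k + 1) / n)

theorem measurableSet_cell (n k : ℕ) : MeasurableSet (cell n k) := measurableSet_Ioc

theorem volume_cell (n k : ℕ) [NeZero n] : volume (cell n k) = (n : ℝ≥0∞)⁻¹ := by
  rw [cell, Real.volume_Ioc, ← sub_div, add_sub_cancel_left, one_div,
    ENNReal.ofReal_inv_of_pos (by simp [Nat.pos_of_neZero]), ENNReal.ofReal_natCast]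

instance (n k : ℕ) : IsFiniteMeasure (volume.restrict (cell n k)) :=
  isFiniteMeasure_restrict.2 measure_Ioc_lt_top.ne

instance (n k : ℕ) [NeZero n] : NeZero (volume.restrict (cell n k)) :=
  ⟨by simp [Measure.restrict_eq_zero, volume_cell]⟩

theorem cell_subset_Ioc_zero_one {n k : ℕ} (hk : k < n) : cell n k ⊆ Ioc 0 1 := by
  have hn : (0 : ℝ) < n := by simp; omega
  refine Ioc_subset_Ioc (by positivity) ?_
  rw [div_le_one hn]
  exact_mod_cast hk

theorem pairwise_disjoint_cell (n : ℕ) : Pairwise (Function.onFun Disjoint (cell n)) := by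
  have hmono : Monotone fun k : ℕ => (k : ℝ) / n := fun k l h => by
    dsimp only; gcongr
  unfold cell
  simpa using hmono.pairwise_disjoint_on_Ioc_succ

theorem cell_succ_subset_Ioc_add {n k : ℕ} {x : ℝ} (hx : x ∈ cell n k) :
    cell n (k + 1) ⊆ Ioc (x + 0) (x + 2 / n) := by
  simp only [cell, Nat.cast_add, Nat.cast_one, mem_Ioc] at hx ⊢
  refine Ioc_subset_Ioc (by linarith) ?_
  have : ((k : ℝ) + 1 + 1) / n = k / n + 2 / n := by ring
  linarith

theorem average_cell_eq_mul_intervalIntegral (n k : ℕ) [NeZero n] (f : ℝ → ℝ) :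
    ⨍ x in cell n k, f x = n * ∫ x in (k / n : ℝ)..((k + 1) / n), f x := by
  rw [setAverage_eq, measureReal_def, volume_cell, intervalIntegral.integral_of_le
    (by gcongr; linarith), ENNReal.toReal_inv, ENNReal.toReal_natCast, inv_inv, smul_eq_mul, cell]

section Cells

variable {E : Type*} [NormedAddCommGroup E] [NormedSpace ℝ E] [CompleteSpace E]
  {n : ℕ} [NeZero n] {p : ℝ} {v : ℝ → E}

theorem enorm_average_cell_succ_sub_rpow_le {k : ℕ} (hp : 1 ≤ p)
    (hk : IntegrableOn v (cell n k)) (hk' : IntegrableOn v (cell n (k + 1))) :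
    ‖(⨍ y in cell n (k + 1), v y) - ⨍ x in cell n k, v x‖ₑ ^ p ≤
      (n : ℝ≥0∞) ^ 2 * ∫⁻ x in cell n k, ∫⁻ s in Ioc (0 : ℝ) (2 / n), ‖v (x + s) - v x‖ₑ ^ p := by
  rw [average_sub_average_eq_average_average hk hk']
  calc _ ≤ ⨍⁻ x in cell n k, ‖⨍ y in cell n (k + 1), (v y - v x)‖ₑ ^ p ∂volume :=
        enorm_average_rpow_le_laverage_enorm_rpow _ hp _
    _ ≤ ⨍⁻ x in cell n k, ⨍⁻ y in cell n (k + 1), ‖v y - v x‖ₑ ^ p ∂volume ∂volume :=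
        laverage_mono_ae <| ae_of_all _ fun x => enorm_average_rpow_le_laverage_enorm_rpow _ hp _
    _ ≤ ⨍⁻ x in cell n k,
          n * ∫⁻ s in Ioc (0 : ℝ) (2 / n), ‖v (x + s) - v x‖ₑ ^ p ∂volume ∂volume := by
        refine laverage_mono_ae (ae_restrict_of_forall_mem (measurableSet_cell n k) fun x hx => ?_)
        dsimp only
        rw [setLAverage_eq, volume_cell, div_eq_mul_inv, inv_inv, mul_comm,
          setLIntegral_Ioc_comp_const_add x 0 (2 / n) fun y => ‖v y - v x‖ₑ ^ p]
        gcongr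
        exact cell_succ_subset_Ioc_add hx
    _ = (n : ℝ≥0∞) ^ 2 *
          ∫⁻ x in cell n k, ∫⁻ s in Ioc (0 : ℝ) (2 / n), ‖v (x + s) - v x‖ₑ ^ p := by
        rw [setLAverage_eq, volume_cell, lintegral_const_mul' _ _ (ENNReal.natCast_ne_top n),
          div_eq_mul_inv, inv_inv, pow_two]
        ring

theorem enorm_average_cell_sub_rpow_le {i j : ℕ} (hp : 1 ≤ p) (hv : IntegrableOn v (Ioc 0 1))
    (hij : i ≤ j) (hjn : j < n) :
    ‖(⨍ x in cell n j, v x) - ⨍ x in cell n i, v x‖ₑ ^ p ≤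
      (n : ℝ≥0∞) ^ (p + 1) *
        ∫⁻ x in Ioc 0 1, ∫⁻ s in Ioc (0 : ℝ) (2 / n), ‖v (x + s) - v x‖ₑ ^ p := by
  set A : ℕ → E := fun k => ⨍ x in cell n k, v x
  set F : ℝ → ℝ≥0∞ := fun x => ∫⁻ s in Ioc (0 : ℝ) (2 / n), ‖v (x + s) - v x‖ₑ ^ p
  have hn : (n : ℝ≥0∞) ≠ 0 := by simp [NeZero.ne n]
  have hcell : ∀ k ∈ Finset.Ico i j, cell n k ⊆ Ioc 0 1 ∧ cell n (k + 1) ⊆ Ioc 0 1 :=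
    fun k hk => by
      rw [Finset.mem_Ico] at hk
      exact ⟨cell_subset_Ioc_zero_one (by omega), cell_subset_Ioc_zero_one (by omega)⟩
  have hunion : ∑ k ∈ Finset.Ico i j, ∫⁻ x in cell n k, F x ≤ ∫⁻ x in Ioc 0 1, F x := by
    rw [← lintegral_biUnion_finset ((pairwise_disjoint_cell n).set_pairwise _)
      (fun k _ => measurableSet_cell n k)]
    exact lintegral_mono_set (iUnion₂_subset fun k hk => (hcell k hk).1)
  calc ‖A j - A i‖ₑ ^ p = ‖∑ k ∈ Finset.Ico i j, (A (k + 1) - A k)‖ₑ ^ p := by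
        rw [Finset.sum_Ico_sub A hij]
    _ ≤ (∑ k ∈ Finset.Ico i j, ‖A (k + 1) - A k‖ₑ) ^ p := by
        gcongr
        exact enorm_sum_le _ _
    _ ≤ ((Finset.Ico i j).card : ℝ≥0∞) ^ (p - 1) *
          ∑ k ∈ Finset.Ico i j, ‖A (k + 1) - A k‖ₑ ^ p :=
        ENNReal.rpow_sum_le_const_mul_sum_rpow _ _ hp
    _ ≤ (n : ℝ≥0∞) ^ (p - 1) * ∑ k ∈ Finset.Ico i j, (n : ℝ≥0∞) ^ 2 * ∫⁻ x in cell n k, F x := by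
        gcongr with k hk
        · rw [Nat.card_Ico]; omega
        · exact enorm_average_cell_succ_sub_rpow_le hp (hv.mono_set (hcell k hk).1)
            (hv.mono_set (hcell k hk).2)
    _ ≤ (n : ℝ≥0∞) ^ (p - 1) * ((n : ℝ≥0∞) ^ 2 * ∫⁻ x in Ioc 0 1, F x) := by
        rw [← Finset.mul_sum]
        gcongr
    _ = (n : ℝ≥0∞) ^ (p + 1) * ∫⁻ x in Ioc 0 1, F x := by
        rw [← mul_assoc, ← ENNReal.rpow_two, ← ENNReal.rpow_add _ _ hn (ENNReal.natCast_ne_top n)]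
        ring_nf

end Cells

theorem abs_average_cell_sub_rpow_le {n i j : ℕ} [NeZero n] {p : ℝ} {v : ℝ → ℝ} (hp : 1 ≤ p)
    (hv : Measurable v) (hvp : MemLp v (ENNReal.ofReal p) (volume.restrict (Ioc 0 (1 + 2 / n))))
    (hij : i ≤ j) (hjn : j < n) :
    |(⨍ x in cell n j, v x) - ⨍ x in cell n i, v x| ^ p ≤
      (n : ℝ) ^ (p + 1) *
        ∫ s in Ioc (0 : ℝ) (2 / n), ∫ x in Ioc (0 : ℝ) 1, |v (x + s) - v x| ^ p := by
  have hp₀ : 0 < p := by linarith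
  have hofReal (r : ℝ) : ENNReal.ofReal (|r| ^ p) = ‖r‖ₑ ^ p := by
    rw [Real.enorm_eq_ofReal_abs, ENNReal.ofReal_rpow_of_nonneg (abs_nonneg r) hp₀.le]
  have hint : IntegrableOn v (Ioc 0 1) :=
    IntegrableOn.mono_set (hvp.integrable (by simpa using hp))
      (Ioc_subset_Ioc le_rfl (le_add_of_nonneg_right (by positivity)))
  have hvp' : ∫⁻ y in Ioc (0 : ℝ) (1 + 2 / n), ‖v y‖ₑ ^ p ≠ ∞ := by
    simpa [ENNReal.toReal_ofReal hp₀.le] using (lintegral_rpow_enorm_lt_top_of_eLpNorm_lt_top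
      (by simpa using hp₀) ENNReal.ofReal_ne_top hvp.eLpNorm_lt_top).ne
  have hfin := lintegral_lintegral_enorm_comp_add_sub_rpow_ne_top hp (by positivity) hvp'
  have hmeas : Measurable (Function.uncurry fun s x => |v (x + s) - v x| ^ p) :=
    ((hv.comp (measurable_snd.add measurable_fst)).sub (hv.comp measurable_snd)).abs.pow_const p
  have hswap := lintegral_lintegral_swap (μ := volume.restrict (Ioc (0 : ℝ) 1))
    (ν := volume.restrict (Ioc (0 : ℝ) (2 / n)))
    (f := fun x s => ENNReal.ofReal (|v (x + s) - v x| ^ p))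
    (hmeas.comp measurable_swap).ennreal_ofReal.aemeasurable
  simp only [hofReal] at hswap
  rw [integral_integral_eq_toReal_lintegral_lintegral hmeas (fun _ _ => by positivity)
    (by simpa only [hofReal, ← hswap] using hfin)]
  simp only [hofReal, ← hswap]
  calc |(⨍ x in cell n j, v x) - ⨍ x in cell n i, v x| ^ p
      = (‖(⨍ x in cell n j, v x) - ⨍ x in cell n i, v x‖ₑ ^ p).toReal := by
        rw [← hofReal, ENNReal.toReal_ofReal (by positivity)]
    _ ≤ _ := ENNReal.toReal_mono (by finiteness) (enorm_average_cell_sub_rpow_le hp hint hij hjn)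
    _ = _ := by rw [ENNReal.toReal_mul, ← ENNReal.toReal_rpow, ENNReal.toReal_natCast]

theorem integral_integral_abs_comp_add_sub_rpow_congr {u v : ℝ → ℝ} {p a b c : ℝ} (hab : a ≤ b)
    (hc : 0 ≤ c) (huv : ∀ᵐ y, y ∈ Ioo a (b + c) → u y = v y) :
    ∫ s in (0 : ℝ)..c, ∫ x in a..b, |u (x + s) - u x| ^ p =
      ∫ s in Ioc 0 c, ∫ x in Ioc a b, |v (x + s) - v x| ^ p := by
  rw [intervalIntegral.integral_of_le hc]
  refine setIntegral_congr_fun measurableSet_Ioc fun s hs => ?_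
  have hshift : ∀ᵐ x, x + s ∈ Ioo a (b + c) → u (x + s) = v (x + s) :=
    (measurePreserving_add_right volume s).quasiMeasurePreserving.ae huv
  rw [intervalIntegral.integral_of_le hab, integral_Ioc_eq_integral_Ioo,
    integral_Ioc_eq_integral_Ioo]
  refine setIntegral_congr_ae measurableSet_Ioo ?_
  filter_upwards [huv, hshift] with x hx₀ hxs hx
  rw [hx₀ ⟨hx.1, by linarith [hx.2]⟩, hxs ⟨by linarith [hx.1, hs.1], by linarith [hx.2, hs.2]⟩]

theorem stmt_5_general (p : ℝ) (hp : 1 ≤ p) (n : ℕ) (u : ℝ → ℝ)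
    (hu : MemLp u (ENNReal.ofReal p) (volume.restrict (Set.Ioo 0 (1 + 2 / (n : ℝ)))))
    (a : ℕ → ℝ)
    (ha : ∀ k, a k = (n : ℝ) * ∫ s in ((k : ℝ) / n)..(((k : ℝ) + 1) / n), u s)
    (i j : ℕ) (hij : i < j) (hj : j ≤ n - 1) :
    |a j - a i| ^ p ≤
      (n : ℝ) ^ (p + 1) * ∫ s in (0:ℝ)..(2 / (n : ℝ)), ∫ x in (0:ℝ)..1, |u (x + s) - u x| ^ p := by
  have : NeZero n := ⟨by omega⟩
  obtain ⟨v, hv, huv⟩ : ∃ v, Measurable v ∧ u =ᵐ[volume.restrict (Ioo (0 : ℝ) (1 + 2 / n))] v :=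
    ⟨_, hu.1.stronglyMeasurable_mk.measurable, hu.1.ae_eq_mk⟩
  have hvp : MemLp v (ENNReal.ofReal p) (volume.restrict (Ioc (0 : ℝ) (1 + 2 / n))) := by
    rw [← Measure.restrict_congr_set Ioo_ae_eq_Ioc]
    exact hu.ae_eq huv
  have huv' := (ae_restrict_iff' measurableSet_Ioo).1 huv
  have h2n : (0 : ℝ) < 2 / n := div_pos two_pos (Nat.cast_pos.2 (Nat.pos_of_neZero n))
  have ha' : ∀ k < n, a k = ⨍ x in cell n k, v x := fun k hk => by
    rw [ha, ← average_cell_eq_mul_intervalIntegral]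
    refine setAverage_congr_fun (measurableSet_cell n k) ?_
    filter_upwards [huv'] with x hx hxk
    have hx01 := cell_subset_Ioc_zero_one hk hxk
    exact hx ⟨hx01.1, by linarith [hx01.2]⟩
  rw [ha' j (by omega), ha' i (by omega),
    integral_integral_abs_comp_add_sub_rpow_congr zero_le_one h2n.le huv']
  exact abs_average_cell_sub_rpow_le hp hv hvp hij.le (by omega)

/-- For `p ≥ 1`, an integer `n ≥ 2`, and `u ∈ L^p(0, 1 + 2/n)`, with
`a_k = n ∫_{k/n}^{(k+1)/n} u`, for all `0 ≤ i < j ≤ n−1`: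
`|a_j − a_i|^p ≤ n^{p+1} ∫₀^{2/n} ∫₀^1 |u(x+s) − u(x)|^p dx ds`. -/
theorem stmt_5 (p : ℝ) (hp : 1 ≤ p) (n : ℕ) (hn : 2 ≤ n) (u : ℝ → ℝ)
    (hu : MemLp u (ENNReal.ofReal p) (volume.restrict (Set.Ioo 0 (1 + 2 / (n : ℝ)))))
    (a : ℕ → ℝ)
    (ha : ∀ k, a k = (n : ℝ) * ∫ s in ((k : ℝ) / n)..(((k : ℝ) + 1) / n), u s)
    (i j : ℕ) (hij : i < j) (hj : j ≤ n - 1) :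
    |a j - a i| ^ p ≤
      (n : ℝ) ^ (p + 1) * ∫ s in (0:ℝ)..(2 / (n : ℝ)), ∫ x in (0:ℝ)..1, |u (x + s) - u x| ^ p :=
  stmt_5_general p hp n u hu a ha i j hij hj
end

section
/- Let p > 1 and let (ρ, ξ) be a C¹ solution on [0,T] × [0,1] of the system ρ_t − ρ_x = −(1/2) a (ρ − ξ), ξ_t + ξ_x = (1/2) a (ρ − ξ) with boundary conditions ρ(t,0) = ξ(t,0) and ρ(t,1) = ξ(t,1), where a is continuous. Then for all t ∈ [0,T], (1/p)∫₀¹(|ρ(t,x)|^p + |ξ(t,x)|^p) dx + (1/2)∫₀^t ∫₀¹ a (ρ−ξ)(ρ|ρ|^{p−2} − ξ|ξ|^{p−2}) dx ds = (1/p)∫₀¹(|ρ(0,x)|^p + |ξ(0,x)|^p) dx. -/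
/-!
The energy density `|ρ|^p + |ξ|^p` is `C¹` (since `p > 1`), and along the system its time
derivative is the space derivative of the flux `|ρ|^p - |ξ|^p` minus `p/2` times the
dissipation `a (ρ - ξ)(ρ|ρ|^{p-2} - ξ|ξ|^{p-2})`. Integrating in `x`, the flux term vanishes
because `ρ = ξ` at both endpoints, so the energy plus half the accumulated dissipation has
zero derivative on `[0, T]` and is therefore constant.
-/

open MeasureTheory Function Set intervalIntegral

section PartialDerivatives

variable {E : Type*} [NormedAddCommGroup E] [NormedSpace ℝ E] {f : ℝ → ℝ → E}

theorem DifferentiableAt.hasDerivAt_partial_fst {t x : ℝ}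
    (hf : DifferentiableAt ℝ (uncurry f) (t, x)) :
    HasDerivAt (fun s => f s x) (fderiv ℝ (uncurry f) (t, x) (1, 0)) t := by
  simpa [comp_def] using
    hf.hasFDerivAt.comp_hasDerivAt t ((hasDerivAt_id t).prodMk (hasDerivAt_const t x))

theorem DifferentiableAt.hasDerivAt_partial_snd {t x : ℝ}
    (hf : DifferentiableAt ℝ (uncurry f) (t, x)) :
    HasDerivAt (fun y => f t y) (fderiv ℝ (uncurry f) (t, x) (0, 1)) x := by
  simpa [comp_def] using
    hf.hasFDerivAt.comp_hasDerivAt x ((hasDerivAt_const x t).prodMk (hasDerivAt_id x))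

theorem ContDiff.continuous_partial_fst (hf : ContDiff ℝ 1 (uncurry f)) :
    Continuous (uncurry fun t x => deriv (fun s => f s x) t) := by
  have h : (uncurry fun t x => deriv (fun s => f s x) t) =
      fun q => fderiv ℝ (uncurry f) q (1, 0) :=
    funext fun q => (hf.differentiable one_ne_zero q).hasDerivAt_partial_fst.deriv
  rw [h]
  exact (hf.continuous_fderiv one_ne_zero).clm_apply continuous_const

theorem ContDiff.continuous_partial_snd (hf : ContDiff ℝ 1 (uncurry f)) :
    Continuous (uncurry fun t x => deriv (fun y => f t y) x) := by
  have h : (uncurry fun t x => deriv (fun y => f t y) x) =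
      fun q => fderiv ℝ (uncurry f) q (0, 1) :=
    funext fun q => (hf.differentiable one_ne_zero q).hasDerivAt_partial_snd.deriv
  rw [h]
  exact (hf.continuous_fderiv one_ne_zero).clm_apply continuous_const

theorem ContDiff.hasDerivAt_intervalIntegral (hf : ContDiff ℝ 1 (uncurry f)) (a b t₀ : ℝ) :
    HasDerivAt (fun t => ∫ x in a..b, f t x)
      (∫ x in a..b, deriv (fun s => f s x) t₀) t₀ := by
  have hf' := hf.continuous_partial_fst
  obtain ⟨M, hM⟩ := (isCompact_closedBall t₀ 1 |>.prod isCompact_uIcc)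
    |>.exists_bound_of_continuousOn hf'.continuousOn
  refine (intervalIntegral.hasDerivAt_integral_of_dominated_loc_of_deriv_le (bound := fun _ => M)
    (Metric.closedBall_mem_nhds t₀ one_pos)
    (.of_forall fun t => (hf.continuous.uncurry_left t).aestronglyMeasurable)
    ((hf.continuous.uncurry_left t₀).intervalIntegrable a b)
    (hf'.uncurry_left t₀).aestronglyMeasurable
    (.of_forall fun x hx t ht => hM (t, x) ⟨ht, uIoc_subset_uIcc hx⟩)
    intervalIntegrable_const
    (.of_forall fun x _ t _ =>
      (hf.differentiable one_ne_zero (t, x)).hasDerivAt_partial_fst.differentiableAt.hasDerivAt)).2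

end PartialDerivatives

theorem ContDiff.abs_rpow {E : Type*} [NormedAddCommGroup E] [NormedSpace ℝ E] {f : E → ℝ}
    (hf : ContDiff ℝ 1 f) {p : ℝ} (hp : 1 < p) : ContDiff ℝ 1 fun x => |f x| ^ p := by
  simpa using hf.norm_rpow hp

theorem HasDerivAt.abs_rpow {u : ℝ → ℝ} {u' t p : ℝ} (hu : HasDerivAt u u' t) (hp : 1 < p) :
    HasDerivAt (fun s => |u s| ^ p) (p * (u t * |u t| ^ (p - 2)) * u') t := by
  rw [show p * (u t * |u t| ^ (p - 2)) * u' = p * |u t| ^ (p - 2) * u t * u' by ring]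
  exact (hasDerivAt_abs_rpow (u t) hp).comp t hu

theorem continuous_mul_abs_rpow_sub_two {p : ℝ} (hp : 1 < p) :
    Continuous fun x : ℝ => x * |x| ^ (p - 2) := by
  have hderiv : deriv (fun x : ℝ => |x| ^ p) = fun x => p * (x * |x| ^ (p - 2)) :=
    funext fun x => by simpa using ((hasDerivAt_id x).abs_rpow hp).deriv
  have h : Continuous (deriv fun x : ℝ => |x| ^ p) :=
    (contDiff_id.abs_rpow hp).continuous_deriv le_rfl
  rw [hderiv] at h
  simpa [(by linarith : p ≠ 0)] using h.const_mul p⁻¹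

noncomputable section DampedWave

def lpEnergy (p : ℝ) (ρ ξ : ℝ → ℝ → ℝ) (t : ℝ) : ℝ :=
  ∫ x in (0:ℝ)..1, (|ρ t x| ^ p + |ξ t x| ^ p)

def dissipation (p : ℝ) (a ρ ξ : ℝ → ℝ → ℝ) (s x : ℝ) : ℝ :=
  a s x * (ρ s x - ξ s x) * (ρ s x * |ρ s x| ^ (p - 2) - ξ s x * |ξ s x| ^ (p - 2))

variable {p : ℝ} {a ρ ξ : ℝ → ℝ → ℝ}

theorem continuous_dissipation (hp : 1 < p) (ha : Continuous (uncurry a))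
    (hρ : Continuous (uncurry ρ)) (hξ : Continuous (uncurry ξ)) :
    Continuous (uncurry (dissipation p a ρ ξ)) :=
  have hG := continuous_mul_abs_rpow_sub_two hp
  (ha.mul (hρ.sub hξ)).mul ((hG.comp hρ).sub (hG.comp hξ))

theorem deriv_density_eq_deriv_flux_sub_dissipation {t x : ℝ} (hp : 1 < p)
    (hρ : DifferentiableAt ℝ (uncurry ρ) (t, x))
    (hξ : DifferentiableAt ℝ (uncurry ξ) (t, x))
    (hpde1 : deriv (fun s => ρ s x) t - deriv (fun y => ρ t y) x
      = -(1 / 2) * a t x * (ρ t x - ξ t x))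
    (hpde2 : deriv (fun s => ξ s x) t + deriv (fun y => ξ t y) x
      = (1 / 2) * a t x * (ρ t x - ξ t x)) :
    deriv (fun s => |ρ s x| ^ p + |ξ s x| ^ p) t
      = deriv (fun y => |ρ t y| ^ p - |ξ t y| ^ p) x - p / 2 * dissipation p a ρ ξ t x := by
  have hρt := hρ.hasDerivAt_partial_fst.differentiableAt.hasDerivAt.abs_rpow hp
  have hξt := hξ.hasDerivAt_partial_fst.differentiableAt.hasDerivAt.abs_rpow hp
  have hρx := hρ.hasDerivAt_partial_snd.differentiableAt.hasDerivAt.abs_rpow hp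
  have hξx := hξ.hasDerivAt_partial_snd.differentiableAt.hasDerivAt.abs_rpow hp
  have hdt : deriv (fun s => |ρ s x| ^ p + |ξ s x| ^ p) t = _ := (hρt.add hξt).deriv
  have hdx : deriv (fun y => |ρ t y| ^ p - |ξ t y| ^ p) x = _ := (hρx.sub hξx).deriv
  rw [hdt, hdx, dissipation]
  linear_combination (p * (ρ t x * |ρ t x| ^ (p - 2))) * hpde1
    + (p * (ξ t x * |ξ t x| ^ (p - 2))) * hpde2

theorem hasDerivAt_lpEnergy {t : ℝ} (hp : 1 < p) (ha : Continuous (uncurry a))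
    (hρ : ContDiff ℝ 1 (uncurry ρ)) (hξ : ContDiff ℝ 1 (uncurry ξ))
    (hpde1 : ∀ x ∈ Icc (0:ℝ) 1, deriv (fun s => ρ s x) t - deriv (fun y => ρ t y) x
      = -(1 / 2) * a t x * (ρ t x - ξ t x))
    (hpde2 : ∀ x ∈ Icc (0:ℝ) 1, deriv (fun s => ξ s x) t + deriv (fun y => ξ t y) x
      = (1 / 2) * a t x * (ρ t x - ξ t x))
    (hbc : ρ t 0 = ξ t 0 ∧ ρ t 1 = ξ t 1) :
    HasDerivAt (lpEnergy p ρ ξ)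
      (-(p / 2) * ∫ x in (0:ℝ)..1, dissipation p a ρ ξ t x) t := by
  have hdensity : ContDiff ℝ 1 (uncurry fun t x => |ρ t x| ^ p + |ξ t x| ^ p) :=
    (hρ.abs_rpow hp).add (hξ.abs_rpow hp)
  have hflux : ContDiff ℝ 1 (uncurry fun t x => |ρ t x| ^ p - |ξ t x| ^ p) :=
    (hρ.abs_rpow hp).sub (hξ.abs_rpow hp)
  have hflux_int : IntervalIntegrable (deriv fun y => |ρ t y| ^ p - |ξ t y| ^ p) volume 0 1 :=
    (hflux.continuous_partial_snd.uncurry_left t).intervalIntegrable 0 1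
  have hdiss_int : IntervalIntegrable (dissipation p a ρ ξ t) volume 0 1 :=
    ((continuous_dissipation hp ha hρ.continuous hξ.continuous).uncurry_left t).intervalIntegrable
      0 1
  refine (hdensity.hasDerivAt_intervalIntegral 0 1 t).congr_deriv ?_
  calc ∫ x in (0:ℝ)..1, deriv (fun s => |ρ s x| ^ p + |ξ s x| ^ p) t
      = ∫ x in (0:ℝ)..1, (deriv (fun y => |ρ t y| ^ p - |ξ t y| ^ p) x
          - p / 2 * dissipation p a ρ ξ t x) := by
        refine integral_congr fun x hx => ?_
        rw [uIcc_of_le zero_le_one] at hx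
        exact deriv_density_eq_deriv_flux_sub_dissipation hp (hρ.differentiable one_ne_zero _)
          (hξ.differentiable one_ne_zero _) (hpde1 x hx) (hpde2 x hx)
    _ = (|ρ t 1| ^ p - |ξ t 1| ^ p) - (|ρ t 0| ^ p - |ξ t 0| ^ p)
          - p / 2 * ∫ x in (0:ℝ)..1, dissipation p a ρ ξ t x := by
        have hflux_diff : ∀ x ∈ uIcc (0:ℝ) 1,
            DifferentiableAt ℝ (fun y => |ρ t y| ^ p - |ξ t y| ^ p) x := fun x _ =>
          (hflux.differentiable one_ne_zero (t, x)).hasDerivAt_partial_snd.differentiableAt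
        rw [integral_sub hflux_int (hdiss_int.const_mul _), intervalIntegral.integral_const_mul,
          integral_deriv_eq_sub hflux_diff hflux_int]
    _ = -(p / 2) * ∫ x in (0:ℝ)..1, dissipation p a ρ ξ t x := by
        rw [hbc.1, hbc.2]
        ring

end DampedWave

theorem stmt_12_general (p T : ℝ) (hp : 1 < p) (a ρ ξ : ℝ → ℝ → ℝ)
    (ha : Continuous (fun q : ℝ × ℝ => a q.1 q.2))
    (hρ : ContDiff ℝ 1 (fun q : ℝ × ℝ => ρ q.1 q.2))
    (hξ : ContDiff ℝ 1 (fun q : ℝ × ℝ => ξ q.1 q.2))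
    (hpde1 : ∀ t ∈ Set.Icc (0:ℝ) T, ∀ x ∈ Set.Icc (0:ℝ) 1,
      deriv (fun s => ρ s x) t - deriv (fun y => ρ t y) x
        = -(1 / 2) * a t x * (ρ t x - ξ t x))
    (hpde2 : ∀ t ∈ Set.Icc (0:ℝ) T, ∀ x ∈ Set.Icc (0:ℝ) 1,
      deriv (fun s => ξ s x) t + deriv (fun y => ξ t y) x
        = (1 / 2) * a t x * (ρ t x - ξ t x))
    (hbc : ∀ t ∈ Set.Icc (0:ℝ) T, ρ t 0 = ξ t 0 ∧ ρ t 1 = ξ t 1) :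
    ∀ t ∈ Set.Icc (0:ℝ) T,
      (1 / p) * (∫ x in (0:ℝ)..1, (|ρ t x| ^ p + |ξ t x| ^ p))
        + (1 / 2) * ∫ s in (0:ℝ)..t, ∫ x in (0:ℝ)..1,
            a s x * (ρ s x - ξ s x)
              * (ρ s x * |ρ s x| ^ (p - 2) - ξ s x * |ξ s x| ^ (p - 2))
      = (1 / p) * ∫ x in (0:ℝ)..1, (|ρ 0 x| ^ p + |ξ 0 x| ^ p) := by
  set F : ℝ → ℝ := fun t => (1 / p) * lpEnergy p ρ ξ t
    + (1 / 2) * ∫ s in (0:ℝ)..t, ∫ x in (0:ℝ)..1, dissipation p a ρ ξ s x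
  have hdiss : Continuous fun s => ∫ x in (0:ℝ)..1, dissipation p a ρ ξ s x :=
    continuous_parametric_intervalIntegral_of_continuous'
      (continuous_dissipation hp ha hρ.continuous hξ.continuous) 0 1
  have hF : ∀ t ∈ Icc (0:ℝ) T, HasDerivAt F 0 t := fun t ht => by
    have h := ((hasDerivAt_lpEnergy hp ha hρ hξ (hpde1 t ht) (hpde2 t ht) (hbc t ht)).const_mul
      (1 / p)).add ((hdiss.integral_hasStrictDerivAt 0 t).hasDerivAt.const_mul (1 / 2))
    refine h.congr_deriv ?_
    field_simp [(zero_lt_one.trans hp).ne']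
    ring
  intro t ht
  have hconst := constant_of_has_deriv_right_zero
    (fun s hs => (hF s hs).continuousAt.continuousWithinAt)
    (fun s hs => (hF s (Ico_subset_Icc_self hs)).hasDerivWithinAt) t ht
  simpa [F, lpEnergy, dissipation] using hconst

/-- L^p energy identity for the hyperbolic system with Dirichlet-type boundary conditions
`ρ = ξ` at both endpoints. -/
theorem stmt_12 (p T : ℝ) (hp : 1 < p) (hT : 0 < T) (a ρ ξ : ℝ → ℝ → ℝ)
    (ha : Continuous (fun q : ℝ × ℝ => a q.1 q.2))
    (hρ : ContDiff ℝ 1 (fun q : ℝ × ℝ => ρ q.1 q.2))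
    (hξ : ContDiff ℝ 1 (fun q : ℝ × ℝ => ξ q.1 q.2))
    (hpde1 : ∀ t ∈ Set.Icc (0:ℝ) T, ∀ x ∈ Set.Icc (0:ℝ) 1,
      deriv (fun s => ρ s x) t - deriv (fun y => ρ t y) x
        = -(1 / 2) * a t x * (ρ t x - ξ t x))
    (hpde2 : ∀ t ∈ Set.Icc (0:ℝ) T, ∀ x ∈ Set.Icc (0:ℝ) 1,
      deriv (fun s => ξ s x) t + deriv (fun y => ξ t y) x
        = (1 / 2) * a t x * (ρ t x - ξ t x))
    (hbc : ∀ t ∈ Set.Icc (0:ℝ) T, ρ t 0 = ξ t 0 ∧ ρ t 1 = ξ t 1) :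
    ∀ t ∈ Set.Icc (0:ℝ) T,
      (1 / p) * (∫ x in (0:ℝ)..1, (|ρ t x| ^ p + |ξ t x| ^ p))
        + (1 / 2) * ∫ s in (0:ℝ)..t, ∫ x in (0:ℝ)..1,
            a s x * (ρ s x - ξ s x)
              * (ρ s x * |ρ s x| ^ (p - 2) - ξ s x * |ξ s x| ^ (p - 2))
      = (1 / p) * ∫ x in (0:ℝ)..1, (|ρ 0 x| ^ p + |ξ 0 x| ^ p) :=
  stmt_12_general p T hp a ρ ξ ha hρ hξ hpde1 hpde2 hbc
end
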